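/- Under hypotheses (2.5) and (2.6), with S_2 = S_1\{0} where S_1 = {x : φ(x) > (Δ/8)φ(0)}, one has ∑_{y∈F_p^×} |S_2 ∩ y⁻¹S_2| μ(y) ≥ Δp/(4φ(0)). -/

import Mathlib

open Finset Complex
open scoped Classical BigOperators Pointwise

/-- The additive character `x ↦ e^{2πix/p}` on `ZMod p`. -/
noncomputable def ePsi (p : ℕ) (x : ZMod p) : ℂ :=
  Complex.exp (2 * Real.pi * Complex.I * (x.val : ℂ) / (p : ℂ))

/-- Fourier transform of a (real) measure on `ZMod p`. -/
noncomputable def ft (p : ℕ) [NeZero p] (μ : ZMod p → ℝ) (ξ : ZMod p) : ℂ :=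
  ∑ x : ZMod p, (μ x : ℂ) * ePsi p (x * ξ)

/-- Convolution of two functions on `ZMod p`. -/
noncomputable def cnv (p : ℕ) [NeZero p] (f g : ZMod p → ℝ) (x : ZMod p) : ℝ :=
  ∑ y : ZMod p, f y * g (x - y)

/-- `φ(x) = p · (μ ∗ μ⁻)(x)`. -/
noncomputable def phiF (p : ℕ) [NeZero p] (μ : ZMod p → ℝ) (x : ZMod p) : ℝ :=
  (p : ℝ) * cnv p μ (fun y => μ (-y)) x

/-- `k`-fold convolution of `f` (0-fold is the Dirac mass at 0). -/
noncomputable def convIter (p : ℕ) [NeZero p] (f : ZMod p → ℝ) : ℕ → ZMod p → ℝ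
  | 0 => fun x => if x = 0 then 1 else 0
  | n + 1 => cnv p f (convIter p f n)

/-- `ν_k`, the `k`-fold convolution of `ν = μ ∗ μ⁻`. -/
noncomputable def nuk (p : ℕ) [NeZero p] (μ : ZMod p → ℝ) (k : ℕ) : ZMod p → ℝ :=
  convIter p (cnv p μ (fun y => μ (-y))) k

/-- `Λ_δ`, the set of large Fourier coefficients. -/
noncomputable def Lam (p : ℕ) [NeZero p] (μ : ZMod p → ℝ) (δ : ℝ) : Finset (ZMod p) :=
  Finset.univ.filter (fun ξ => (p : ℝ) ^ (-δ) < ‖ft p μ ξ‖)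

/-! By Parseval, (2.5) says `∑_y μ(y) ∑_b ν(yb) ν(b) > Δ ν(0)`, where `ν = μ ∗ μ⁻` is a probability
measure with `φ = p ν` and `ν ≤ ν(0) = ‖μ‖₂²`. The term `y = 0` is `μ(0) ν(0)`. For `y ≠ 0`, the
summand `b = 0` is at most `ν(0)²`, each `b` with `b, yb ∈ S₂` contributes at most `ν(0)²`, and for
every other `b` one of `ν(b)`, `ν(yb)` is at most `(Δ/8) ν(0)`, so these contribute at most
`(Δ/4) ν(0)` in total. As `μ(0), ν(0) < Δ/4`, this leaves
`ν(0)² ∑_{y ≠ 0} |S₂ ∩ y⁻¹S₂| μ(y) > (Δ/4) ν(0)`. -/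

section ZModFourier

variable {N : ℕ} [NeZero N]

lemma ePsi_eq_stdAddChar (x : ZMod N) : ePsi N x = ZMod.stdAddChar x := by
  rw [ePsi, ZMod.stdAddChar_apply, ZMod.toCircle_apply]

lemma sum_ePsi_mul (a : ZMod N) : ∑ ξ, ePsi N (a * ξ) = if a = 0 then (N : ℂ) else 0 := by
  simp_rw [ePsi_eq_stdAddChar, mul_comm a]
  rw [AddChar.sum_mulShift a (ZMod.isPrimitive_stdAddChar N), ZMod.card]
  split_ifs <;> simp

lemma ft_cnv (f g : ZMod N → ℝ) (ξ : ZMod N) : ft N (cnv N f g) ξ = ft N f ξ * ft N g ξ := by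
  unfold ft cnv
  rw [Finset.sum_mul_sum]
  simp only [ePsi_eq_stdAddChar, Complex.ofReal_sum, Complex.ofReal_mul, Finset.sum_mul]
  rw [Finset.sum_comm]
  refine Finset.sum_congr rfl fun y _ =>
    (Fintype.sum_equiv (Equiv.addLeft y) _ _ fun z => ?_).symm
  simp only [Equiv.coe_addLeft, add_sub_cancel_left, add_mul, AddChar.map_add_eq_mul]
  ring

lemma ft_comp_neg (f : ZMod N → ℝ) (ξ : ZMod N) :
    ft N (fun x => f (-x)) ξ = starRingEnd ℂ (ft N f ξ) := by
  simp only [ft, ePsi_eq_stdAddChar, map_sum, map_mul, Complex.conj_ofReal,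
    ← AddChar.map_neg_eq_conj]
  exact Fintype.sum_equiv (Equiv.neg _) _ _ fun x => by simp

lemma sum_ft (f : ZMod N → ℝ) : ∑ ξ, ft N f ξ = ((N * f 0 : ℝ) : ℂ) := by
  unfold ft
  rw [Finset.sum_comm]
  simp_rw [← Finset.mul_sum, sum_ePsi_mul]
  simp [mul_comm]

lemma sum_ft_mul_ft_mul (f g : ZMod N → ℝ) (y : ZMod N) :
    ∑ ξ, ft N f ξ * ft N g (y * ξ) = ((N * ∑ b, f (-(y * b)) * g b : ℝ) : ℂ) := by
  have hexpand : ∀ ξ, ft N f ξ * ft N g (y * ξ)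
      = ∑ a, ∑ b, (f a * g b : ℂ) * ePsi N ((a + y * b) * ξ) := fun ξ => by
    simp only [ft, Finset.sum_mul_sum, ePsi_eq_stdAddChar, add_mul, AddChar.map_add_eq_mul]
    refine Finset.sum_congr rfl fun a _ => Finset.sum_congr rfl fun b _ => ?_
    ring_nf
  calc ∑ ξ, ft N f ξ * ft N g (y * ξ)
      = ∑ a, ∑ b, (f a * g b : ℂ) * ∑ ξ, ePsi N ((a + y * b) * ξ) := by
        simp_rw [hexpand, Finset.mul_sum]
        conv_lhs => rw [Finset.sum_comm]
        exact Finset.sum_congr rfl fun a _ => Finset.sum_comm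
    _ = ((N * ∑ b, f (-(y * b)) * g b : ℝ) : ℂ) := by
        rw [Finset.sum_comm]
        simp_rw [sum_ePsi_mul, add_eq_zero_iff_eq_neg, mul_ite, mul_zero, Finset.sum_ite_eq',
          Finset.mem_univ, if_true]
        push_cast
        rw [Finset.mul_sum]
        exact Finset.sum_congr rfl fun b _ => by ring

noncomputable def autocorr (N : ℕ) [NeZero N] (μ : ZMod N → ℝ) : ZMod N → ℝ :=
  cnv N μ (fun y => μ (-y))

variable (μ : ZMod N → ℝ)

lemma autocorr_apply (x : ZMod N) : autocorr N μ x = ∑ y, μ y * μ (y - x) :=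
  Finset.sum_congr rfl fun y _ => by
    show μ y * μ (-(x - y)) = μ y * μ (y - x)
    rw [neg_sub]

lemma autocorr_nonneg (hμ : ∀ x, 0 ≤ μ x) (x : ZMod N) : 0 ≤ autocorr N μ x := by
  rw [autocorr_apply]
  exact Finset.sum_nonneg fun y _ => mul_nonneg (hμ y) (hμ _)

lemma sum_autocorr : ∑ x, autocorr N μ x = (∑ x, μ x) ^ 2 := by
  simp_rw [autocorr_apply, sq, Finset.sum_mul_sum]
  rw [Finset.sum_comm]
  exact Finset.sum_congr rfl fun y _ => Fintype.sum_equiv (Equiv.subLeft y) _ _ fun x => rfl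

lemma autocorr_neg (x : ZMod N) : autocorr N μ (-x) = autocorr N μ x := by
  rw [autocorr_apply, autocorr_apply]
  refine Fintype.sum_equiv (Equiv.addRight x) _ _ fun y => ?_
  simp only [Equiv.coe_addRight, sub_neg_eq_add, add_sub_cancel_right, mul_comm]

lemma autocorr_zero : autocorr N μ 0 = ∑ x, μ x ^ 2 := by
  simp [autocorr_apply, sq]

lemma autocorr_le_autocorr_zero (x : ZMod N) : autocorr N μ x ≤ autocorr N μ 0 := by
  have hshift : ∑ y, μ (y - x) ^ 2 = ∑ y, μ y ^ 2 :=
    Fintype.sum_equiv (Equiv.subRight x) _ _ fun y => rfl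
  rw [autocorr_apply, autocorr_zero]
  calc ∑ y, μ y * μ (y - x) ≤ ∑ y, (μ y ^ 2 + μ (y - x) ^ 2) / 2 :=
        Finset.sum_le_sum fun y _ => by nlinarith [sq_nonneg (μ y - μ (y - x))]
    _ = ∑ y, μ y ^ 2 := by rw [← Finset.sum_div, Finset.sum_add_distrib, hshift]; ring

lemma autocorr_zero_pos (hμ : μ ≠ 0) : 0 < autocorr N μ 0 := by
  obtain ⟨x, hx⟩ := Function.ne_iff.mp hμ
  rw [autocorr_zero]
  exact Finset.sum_pos' (fun y _ => sq_nonneg _) ⟨x, Finset.mem_univ x, sq_pos_of_ne_zero hx⟩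

lemma phiF_eq_mul_autocorr (x : ZMod N) : phiF N μ x = N * autocorr N μ x := rfl

lemma ofReal_norm_ft_sq (ξ : ZMod N) : ((‖ft N μ ξ‖ ^ 2 : ℝ) : ℂ) = ft N (autocorr N μ) ξ := by
  rw [Complex.ofReal_pow, ← Complex.mul_conj', autocorr, ft_cnv, ft_comp_neg]

lemma sum_norm_ft_sq : ∑ ξ, ‖ft N μ ξ‖ ^ 2 = N * autocorr N μ 0 := by
  apply Complex.ofReal_injective
  rw [Complex.ofReal_sum]
  simp_rw [ofReal_norm_ft_sq]
  exact sum_ft _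

lemma sum_norm_ft_sq_mul_norm_ft_sq (y : ZMod N) :
    ∑ ξ, ‖ft N μ ξ‖ ^ 2 * ‖ft N μ (y * ξ)‖ ^ 2
      = N * ∑ b, autocorr N μ (y * b) * autocorr N μ b := by
  apply Complex.ofReal_injective
  simp_rw [Complex.ofReal_sum, Complex.ofReal_mul, ofReal_norm_ft_sq, sum_ft_mul_ft_mul]
  simp_rw [autocorr_neg]
  norm_cast

lemma sum_sum_norm_ft_sq_mul_norm_ft_sq_mul (w : ZMod N → ℝ) :
    ∑ ξ, ∑ y, ‖ft N μ ξ‖ ^ 2 * ‖ft N μ (y * ξ)‖ ^ 2 * w y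
      = N * ∑ y, w y * ∑ b, autocorr N μ (y * b) * autocorr N μ b := by
  rw [Finset.sum_comm, Finset.mul_sum]
  simp_rw [← Finset.sum_mul, sum_norm_ft_sq_mul_norm_ft_sq]
  exact Finset.sum_congr rfl fun y _ => by ring

end ZModFourier

section Dilation

lemma dilate_mul_le {M : Type*} [MulZeroClass M] [NoZeroDivisors M] [DecidableEq M] (ν : M → ℝ)
    (hν : ∀ x, 0 ≤ ν x) (hmax : ∀ x, ν x ≤ ν 0) {t : ℝ} (ht : 0 ≤ t)
    {S : Finset M} (hS : ∀ x, x ≠ 0 → x ∉ S → ν x ≤ t) {y : M} (hy : y ≠ 0) (b : M) :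
    ν (y * b) * ν b ≤ (if b = 0 then ν 0 ^ 2 else 0)
      + (if b ∈ S.filter (fun x => y * x ∈ S) then ν 0 ^ 2 else 0) + t * (ν (y * b) + ν b) := by
  have hsq : ν (y * b) * ν b ≤ ν 0 ^ 2 := by
    rw [sq]; exact mul_le_mul (hmax _) (hmax _) (hν _) (hν _)
  have htν := mul_nonneg ht (hν (y * b))
  have htν' := mul_nonneg ht (hν b)
  by_cases hb : b = 0
  · subst hb
    rw [if_pos rfl]
    split_ifs <;> linarith [sq_nonneg (ν 0)]
  by_cases hgood : b ∈ S.filter (fun x => y * x ∈ S)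
  · simp only [hb, hgood, if_true, if_false]
    linarith
  simp only [hb, hgood, if_false, zero_add]
  rw [Finset.mem_filter, not_and_or] at hgood
  rcases hgood with hbS | hybS
  · nlinarith [hS b hb hbS, hν (y * b)]
  · nlinarith [hS (y * b) (mul_ne_zero hy hb) hybS, hν b]

variable {F : Type*} [Field F] [Fintype F] [DecidableEq F] (ν : F → ℝ)

lemma sum_dilate_mul_le (hν : ∀ x, 0 ≤ ν x) (hmax : ∀ x, ν x ≤ ν 0) {t : ℝ} (ht : 0 ≤ t)
    {S : Finset F} (hS : ∀ x, x ≠ 0 → x ∉ S → ν x ≤ t) {y : F} (hy : y ≠ 0) :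
    ∑ b, ν (y * b) * ν b
      ≤ ν 0 ^ 2 + 2 * t * ∑ x, ν x + #(S.filter (fun x => y * x ∈ S)) * ν 0 ^ 2 := by
  have hdil : ∑ b, ν (y * b) = ∑ x, ν x := Fintype.sum_equiv (Equiv.mulLeft₀ y hy) _ _ fun _ => rfl
  calc ∑ b, ν (y * b) * ν b
      ≤ ∑ b, ((if b = 0 then ν 0 ^ 2 else 0)
          + (if b ∈ S.filter (fun x => y * x ∈ S) then ν 0 ^ 2 else 0) + t * (ν (y * b) + ν b)) :=
        Finset.sum_le_sum fun b _ => dilate_mul_le ν hν hmax ht hS hy b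
    _ = ν 0 ^ 2 + 2 * t * ∑ x, ν x + #(S.filter (fun x => y * x ∈ S)) * ν 0 ^ 2 := by
        rw [Finset.sum_add_distrib, Finset.sum_add_distrib, ← Finset.mul_sum,
          Finset.sum_add_distrib, hdil, Finset.sum_ite_eq', Finset.sum_ite_mem, Finset.univ_inter,
          Finset.sum_const, nsmul_eq_mul]
        simp only [Finset.mem_univ, if_true]
        ring

lemma sum_mul_sum_dilate_mul_le (μ : F → ℝ) (hμ : ∀ x, 0 ≤ μ x) (hμsum : ∑ x, μ x = 1)
    (hν : ∀ x, 0 ≤ ν x) (hmax : ∀ x, ν x ≤ ν 0) {t : ℝ} (ht : 0 ≤ t)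
    {S : Finset F} (hS : ∀ x, x ≠ 0 → x ∉ S → ν x ≤ t) :
    ∑ y, μ y * ∑ b, ν (y * b) * ν b
      ≤ (μ 0 * ν 0 + 2 * t) * ∑ x, ν x + ν 0 ^ 2
        + ν 0 ^ 2 * ∑ y ∈ univ.filter (fun y => y ≠ 0), #(S.filter (fun x => y * x ∈ S)) * μ y := by
  have hrest : ∑ y ∈ univ.filter (fun y => y ≠ 0), μ y ≤ 1 :=
    hμsum ▸ Finset.sum_le_sum_of_subset_of_nonneg (Finset.filter_subset _ _) fun y _ _ => hμ y
  have hc : 0 ≤ ν 0 ^ 2 + 2 * t * ∑ x, ν x :=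
    add_nonneg (sq_nonneg _) (mul_nonneg (by positivity) (Finset.sum_nonneg fun x _ => hν x))
  rw [← Finset.add_sum_erase _ _ (Finset.mem_univ 0), ← Finset.filter_ne' univ (0 : F)]
  calc μ 0 * ∑ b, ν (0 * b) * ν b + ∑ y ∈ univ.filter (fun y => y ≠ 0), μ y * ∑ b, ν (y * b) * ν b
      ≤ μ 0 * (ν 0 * ∑ x, ν x) + ∑ y ∈ univ.filter (fun y => y ≠ 0),
          μ y * (ν 0 ^ 2 + 2 * t * ∑ x, ν x + #(S.filter (fun x => y * x ∈ S)) * ν 0 ^ 2) := by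
        simp only [zero_mul, ← Finset.mul_sum]
        gcongr with y hy
        · exact hμ y
        · exact sum_dilate_mul_le ν hν hmax ht hS (Finset.mem_filter.mp hy).2
    _ = μ 0 * (ν 0 * ∑ x, ν x) + (ν 0 ^ 2 + 2 * t * ∑ x, ν x) * ∑ y ∈ univ.filter (fun y => y ≠ 0), μ y
          + ν 0 ^ 2 * ∑ y ∈ univ.filter (fun y => y ≠ 0), #(S.filter (fun x => y * x ∈ S)) * μ y := by
        rw [add_assoc, Finset.mul_sum _ _ (ν 0 ^ 2 + _), Finset.mul_sum _ _ (ν 0 ^ 2),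
          ← Finset.sum_add_distrib]
        exact congrArg _ (Finset.sum_congr rfl fun y _ => by ring)
    _ ≤ _ := by nlinarith [mul_le_mul_of_nonneg_left hrest hc]

end Dilation

theorem stmt5_general (p : ℕ) [Fact p.Prime] (μ : ZMod p → ℝ)
    (hpos : ∀ x, 0 ≤ μ x) (hsum : ∑ x : ZMod p, μ x = 1)
    (Δ : ℝ) (hΔ0 : 0 < Δ)
    (h25 : ∑ ξ : ZMod p, ∑ y : ZMod p,
        ‖ft p μ ξ‖ ^ 2 * ‖ft p μ (y * ξ)‖ ^ 2 * μ y
      > Δ * ∑ ξ : ZMod p, ‖ft p μ ξ‖ ^ 2)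
    (h26a : μ 0 < Δ / 4) (h26b : ∑ x : ZMod p, (μ x) ^ 2 < Δ / 4)
    (S1 S2 : Finset (ZMod p))
    (hS1 : S1 = Finset.univ.filter (fun x => Δ / 8 * phiF p μ 0 < phiF p μ x))
    (hS2 : S2 = S1.erase 0) :
    ∑ y ∈ Finset.univ.filter (fun y : ZMod p => y ≠ 0),
        ((S2.filter (fun x => y * x ∈ S2)).card : ℝ) * μ y
      ≥ Δ * p / (4 * phiF p μ 0) := by
  set ν := autocorr p μ
  have hp : (0 : ℝ) < p := Nat.cast_pos.mpr (Fact.out : p.Prime).pos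
  have hν0 : 0 < ν 0 := autocorr_zero_pos μ fun h => by simp [h] at hsum
  have hν0Δ : ν 0 < Δ / 4 := (autocorr_zero μ).trans_lt h26b
  have hνsum : ∑ x, ν x = 1 := by rw [sum_autocorr, hsum, one_pow]
  have hφ : ∀ x, phiF p μ x = p * ν x := phiF_eq_mul_autocorr μ
  have hphys : Δ * ν 0 < ∑ y, μ y * ∑ b, ν (y * b) * ν b := by
    rw [sum_sum_norm_ft_sq_mul_norm_ft_sq_mul, sum_norm_ft_sq] at h25
    exact lt_of_mul_lt_mul_left (by linarith) hp.le
  have hsmall : ∀ x, x ≠ 0 → x ∉ S2 → ν x ≤ Δ / 8 * ν 0 := by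
    intro x hx hxS2
    rw [hS2, hS1, Finset.mem_erase, Finset.mem_filter, hφ, hφ] at hxS2
    exact le_of_mul_le_mul_left (by simpa [hx, mul_left_comm] using hxS2) hp
  have hbound := sum_mul_sum_dilate_mul_le ν μ hpos hsum (autocorr_nonneg μ hpos)
    (autocorr_le_autocorr_zero μ) (by positivity) hsmall
  set X := ∑ y ∈ Finset.univ.filter (fun y : ZMod p => y ≠ 0),
    ((S2.filter (fun x => y * x ∈ S2)).card : ℝ) * μ y
  rw [hνsum, mul_one] at hbound
  have hX : Δ / 4 * ν 0 < ν 0 * X * ν 0 := by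
    nlinarith [mul_lt_mul_of_pos_right h26a hν0, mul_lt_mul_of_pos_right hν0Δ hν0]
  replace hX := lt_of_mul_lt_mul_right hX hν0.le
  calc Δ * p / (4 * phiF p μ 0) = Δ / 4 / ν 0 := by
        rw [hφ]
        field_simp
    _ ≤ X := (div_le_iff₀ hν0).2 (by linarith)

theorem stmt5 (p : ℕ) [Fact p.Prime] (μ : ZMod p → ℝ)
    (hpos : ∀ x, 0 ≤ μ x) (hsum : ∑ x : ZMod p, μ x = 1)
    (Δ : ℝ) (hΔ0 : 0 < Δ) (hΔ1 : Δ ≤ 1 / 2)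
    (h25 : ∑ ξ : ZMod p, ∑ y : ZMod p,
        ‖ft p μ ξ‖ ^ 2 * ‖ft p μ (y * ξ)‖ ^ 2 * μ y
      > Δ * ∑ ξ : ZMod p, ‖ft p μ ξ‖ ^ 2)
    (h26a : μ 0 < Δ / 4) (h26b : ∑ x : ZMod p, (μ x) ^ 2 < Δ / 4)
    (S1 S2 : Finset (ZMod p))
    (hS1 : S1 = Finset.univ.filter (fun x => Δ / 8 * phiF p μ 0 < phiF p μ x))
    (hS2 : S2 = S1.erase 0) :
    ∑ y ∈ Finset.univ.filter (fun y : ZMod p => y ≠ 0),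
        ((S2.filter (fun x => y * x ∈ S2)).card : ℝ) * μ y
      ≥ Δ * p / (4 * phiF p μ 0) :=
  stmt5_general p μ hpos hsum Δ hΔ0 h25 h26a h26b S1 S2 hS1 hS2
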